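/- Fix r ∈ ℤ. Let α be a complex-valued function on {T ∈ Λ(2,O_K) : T ≥ 0} and α* : ℕ₀ → ℂ be such that the Krieg relation α(T) = Σ_{η ∈ ℕ, η | ε(T)} η^{r−1}·α*(−d_K·det(T)/η²) holds for all T ∈ Λ(2,O_K) with T ≥ 0, T ≠ 0. Then for every squarefree positive divisor d of |d_K| and every Atkin–Lehner matrix V_d, one has α(T[V_d]) = α(T) for all T ∈ Λ(2,O_K) with T ≥ 0, T ≠ 0 (where T[V_d] = V_dᴴ T V_d again lies in Λ(2,O_K) and is positive semidefinite). -/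

import Mathlib

noncomputable section

open Complex Matrix
open scoped ComplexOrder

/-- `ω_K`: `√-m` if `m ≢ 3 (mod 4)`, `(1+√-m)/2` if `m ≡ 3 (mod 4)`. -/
def omegaK (m : ℕ) : ℂ :=
  if m % 4 = 3 then (1 + Complex.I * (Real.sqrt m : ℂ)) / 2 else Complex.I * (Real.sqrt m : ℂ)

/-- The ring of integers `O_K = ℤ[ω_K]` of `K = ℚ(√-m)`, as a subring of `ℂ`. -/
def OK (m : ℕ) : Subring ℂ := Subring.closure {omegaK m}

/-- The absolute norm `N(I) = #(O_K / I)` of an ideal `I` of `O_K`. -/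
def idealNorm (m : ℕ) (I : Ideal (OK m)) : ℕ := Nat.card ((OK m) ⧸ I)

/-- The ideal `I(L)` of `O_K` generated by the entries of a matrix `L`. -/
def idealOf {m n : ℕ} (L : Matrix (Fin n) (Fin n) (OK m)) : Ideal (OK m) :=
  Ideal.span (Set.range fun p : Fin n × Fin n => L p.1 p.2)

/-- A matrix over `O_K` viewed as a complex matrix. -/
def matC {m n : ℕ} (L : Matrix (Fin n) (Fin n) (OK m)) : Matrix (Fin n) (Fin n) ℂ :=
  L.map (fun x => (x : ℂ))

/-- `IΛ`: the set of finite sums `Σ cᵢ λᵢ` with `cᵢ ∈ I`, `λᵢ ∈ Λ`. -/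
def idealMulSet (m : ℕ) {r : ℕ} (I : Ideal (OK m)) (Λ : Set (Fin r → ℂ)) : Set (Fin r → ℂ) :=
  { x | ∃ (N : ℕ) (c : Fin N → OK m) (v : Fin N → (Fin r → ℂ)),
      (∀ i, c i ∈ I) ∧ (∀ i, v i ∈ Λ) ∧ x = ∑ i, ((c i : ℂ) • v i) }

/-- The scaled set `a • S`. -/
def smulSet {r : ℕ} (a : ℂ) (S : Set (Fin r → ℂ)) : Set (Fin r → ℂ) := (fun x => a • x) '' S

/-- `Λ' = (1/√N(I)) · (IΛ)`. -/
def scaledLattice (m : ℕ) {r : ℕ} (I : Ideal (OK m)) (Λ : Set (Fin r → ℂ)) :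
    Set (Fin r → ℂ) :=
  smulSet ((Real.sqrt (idealNorm m I) : ℂ))⁻¹ (idealMulSet m I Λ)

/-- An `O_K`-lattice of rank `r` in `ℂ^r`: an `O_K`-submodule which is a free `ℤ`-module of
rank `2r` spanning `ℂ^r` over `ℝ`. -/
structure IsOKLattice (m r : ℕ) (Λ : Set (Fin r → ℂ)) : Prop where
  zero_mem : (0 : Fin r → ℂ) ∈ Λ
  add_mem : ∀ x ∈ Λ, ∀ y ∈ Λ, x + y ∈ Λ
  smul_mem : ∀ c : OK m, ∀ x ∈ Λ, (c : ℂ) • x ∈ Λ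
  exists_basis : ∃ b : Fin (2 * r) → (Fin r → ℂ), (∀ i, b i ∈ Λ) ∧
      ∀ x ∈ Λ, ∃! c : Fin (2 * r) → ℤ, x = ∑ i, (c i : ℂ) • b i
  spans : Submodule.span ℝ Λ = ⊤

/-- The standard Hermitian form `h(x,y) = xᴴ y` on `ℂ^r`. -/
def hermForm {r : ℕ} (x y : Fin r → ℂ) : ℂ := ∑ i, (starRingEnd ℂ) (x i) * y i

/-- The dual lattice `Λ^# = {x : Re h(x,λ) ∈ ℤ for all λ ∈ Λ}`. -/
def dualLattice {r : ℕ} (Λ : Set (Fin r → ℂ)) : Set (Fin r → ℂ) :=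
  { x | ∀ y ∈ Λ, ∃ k : ℤ, (hermForm x y).re = (k : ℝ) }

/-- A theta lattice: an even unimodular `O_K`-lattice. -/
structure IsThetaLattice (m r : ℕ) (Λ : Set (Fin r → ℂ)) : Prop where
  toIsOKLattice : IsOKLattice m r Λ
  even : ∀ x ∈ Λ, ∃ k : ℤ, hermForm x x = 2 * (k : ℂ)
  unimodular : dualLattice Λ = Λ

/-- The Hermitian half space `H_n`. -/
def inHalfSpace {n : ℕ} (Z : Matrix (Fin n) (Fin n) ℂ) : Prop :=
  (((2 * Complex.I)⁻¹) • (Z - Zᴴ)).PosDef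

/-- `n`-tuples of lattice vectors, viewed as `r × n` matrices with all columns in `Λ`. -/
def latticeTuples {r : ℕ} (Λ : Set (Fin r → ℂ)) (n : ℕ) : Set (Matrix (Fin r) (Fin n) ℂ) :=
  { X | ∀ j, (fun i => X i j) ∈ Λ }

/-- The Hermitian theta series `Θ(Z,Λ)⁽ⁿ⁾ = Σ_{λ ∈ Λⁿ} exp(iπ tr(λᴴ λ Z))`. -/
def thetaSeries {r : ℕ} (Λ : Set (Fin r → ℂ)) {n : ℕ} (Z : Matrix (Fin n) (Fin n) ℂ) : ℂ :=
  ∑' X : latticeTuples Λ n,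
    Complex.exp (Complex.I * (Real.pi : ℂ) *
      ((X : Matrix (Fin r) (Fin n) ℂ)ᴴ * (X : Matrix (Fin r) (Fin n) ℂ) * Z).trace)

/-- `|d_K|`, the absolute value of the discriminant of `K = ℚ(√-m)`. -/
def dKabs (m : ℕ) : ℕ := if m % 4 = 3 then m else 4 * m

/-- `√d_K = i √|d_K|`. -/
def sqrtdK (m : ℕ) : ℂ := Complex.I * (Real.sqrt (dKabs m) : ℂ)

/-- `O_K^⋆ = (1/√d_K) O_K`. -/
def OKstar (m : ℕ) : Set ℂ := { t | ∃ a ∈ OK m, t = a / sqrtdK m }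

/-- Membership in `Λ(2, O_K)`: Hermitian `2×2` matrices with integral diagonal and
off-diagonal entries in `O_K^⋆`. -/
def inLambda2 (m : ℕ) (T : Matrix (Fin 2) (Fin 2) ℂ) : Prop :=
  Tᴴ = T ∧ (∃ k : ℤ, T 0 0 = (k : ℂ)) ∧ (∃ l : ℤ, T 1 1 = (l : ℂ)) ∧ T 0 1 ∈ OKstar m

/-- `ε(T) = max {q ∈ ℕ : (1/q) T ∈ Λ(2,O_K)}`. -/
def eps (m : ℕ) (T : Matrix (Fin 2) (Fin 2) ℂ) : ℕ :=
  sSup { q : ℕ | 0 < q ∧ inLambda2 m (((q : ℂ))⁻¹ • T) }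

/-- `√-m = i√m`. -/
def sqrtNegM (m : ℕ) : ℂ := Complex.I * (Real.sqrt m : ℂ)

/-- Atkin-Lehner matrices `V_d`. -/
def IsAtkinLehner (m d : ℕ) (V : Matrix (Fin 2) (Fin 2) ℂ) : Prop :=
  V.det = 1 ∧ ∃ a b c e : ℤ,
    V = ((Real.sqrt d : ℂ))⁻¹ •
      !![(a : ℂ) * d, (b : ℂ) * ((m : ℂ) + sqrtNegM m);
         (c : ℂ) * ((m : ℂ) - sqrtNegM m), (e : ℂ) * d]

/-- `J = (0, -I; I, 0)`. -/
def Jmat (n : ℕ) : Matrix (Fin n ⊕ Fin n) (Fin n ⊕ Fin n) ℂ := Matrix.fromBlocks 0 (-1) 1 0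

/-- Membership in `SU(n,n;ℂ)`. -/
def inSU (n : ℕ) (M : Matrix (Fin n ⊕ Fin n) (Fin n ⊕ Fin n) ℂ) : Prop :=
  M.det = 1 ∧ Mᴴ * Jmat n * M = Jmat n

/-- Membership in the Hermitian modular group `Γ_n(O_K)`. -/
def inGammaN (m n : ℕ) (M : Matrix (Fin n ⊕ Fin n) (Fin n ⊕ Fin n) ℂ) : Prop :=
  inSU n M ∧ ∀ i j, M i j ∈ OK m

/-- The action `M⟨Z⟩ = (AZ+B)(CZ+D)⁻¹`. -/
def moebius {n : ℕ} (M : Matrix (Fin n ⊕ Fin n) (Fin n ⊕ Fin n) ℂ)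
    (Z : Matrix (Fin n) (Fin n) ℂ) : Matrix (Fin n) (Fin n) ℂ :=
  (M.toBlocks₁₁ * Z + M.toBlocks₁₂) * (M.toBlocks₂₁ * Z + M.toBlocks₂₂)⁻¹

/-- A Hermitian modular form of degree 2 and weight `r`: holomorphic on `H₂` and modular
with respect to `Γ₂(O_K)`. -/
structure IsHermitianModularForm2 (m : ℕ) (r : ℤ) (f : Matrix (Fin 2) (Fin 2) ℂ → ℂ) : Prop where
  holo : DifferentiableOn ℂ (fun Z : Fin 2 → Fin 2 → ℂ => f (Matrix.of Z))
    { Z | inHalfSpace (Matrix.of Z) }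
  modular : ∀ M, inGammaN m 2 M → ∀ Z, inHalfSpace Z →
    f (moebius M Z) = (M.toBlocks₂₁ * Z + M.toBlocks₂₂).det ^ r * f Z

/-- The index set `{T ∈ Λ(2,O_K) : T ≥ 0}` of the Fourier expansion. -/
def lambda2PSD (m : ℕ) : Set (Matrix (Fin 2) (Fin 2) ℂ) := { T | inLambda2 m T ∧ T.PosSemidef }

/-- `f` has Fourier expansion `f(Z) = Σ_T α(T) e^{2πi tr(TZ)}` on `H₂`. -/
def IsFourierExpansion (m : ℕ) (f : Matrix (Fin 2) (Fin 2) ℂ → ℂ)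
    (α : Matrix (Fin 2) (Fin 2) ℂ → ℂ) : Prop :=
  ∀ Z, inHalfSpace Z → HasSum (fun T : lambda2PSD m =>
    α T * Complex.exp (2 * (Real.pi : ℂ) * Complex.I *
      ((T : Matrix (Fin 2) (Fin 2) ℂ) * Z).trace)) (f Z)

/-- For `T = (k, t; t̄, l)` and `η`, the matrix `(1, t/η; t̄/η, kl/η²)`. -/
def suganoMat (T : Matrix (Fin 2) (Fin 2) ℂ) (η : ℕ) : Matrix (Fin 2) (Fin 2) ℂ :=
  !![1, T 0 1 / (η : ℂ); T 1 0 / (η : ℂ), T 0 0 * T 1 1 / (η : ℂ) ^ 2]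

/-- Sugano's Maass relation for the Fourier coefficients `α`. -/
def SuganoRelation (m : ℕ) (r : ℤ) (α : Matrix (Fin 2) (Fin 2) ℂ → ℂ) : Prop :=
  ∀ T, inLambda2 m T → T.PosSemidef → T ≠ 0 →
    α T = ∑ η ∈ (eps m T).divisors, (η : ℂ) ^ (r - 1) * α (suganoMat T η)

-- The natural number represented by a complex number (junk value `0` otherwise).
open scoped Classical in
def natValue (z : ℂ) : ℕ := if h : ∃ n : ℕ, (n : ℂ) = z then h.choose else 0

/-- Krieg's Maass relation: `α(T) = Σ_{η ∣ ε(T)} η^{r-1} α*(-d_K det T / η²)`. -/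
def KriegRelation (m : ℕ) (r : ℤ) (α : Matrix (Fin 2) (Fin 2) ℂ → ℂ) (αstar : ℕ → ℂ) : Prop :=
  ∀ T, inLambda2 m T → T.PosSemidef → T ≠ 0 →
    α T = ∑ η ∈ (eps m T).divisors,
      (η : ℂ) ^ (r - 1) * αstar (natValue ((dKabs m : ℂ) * T.det / (η : ℂ) ^ 2))

-- ===== Auxiliary lemmas =====

lemma s_mul_s (m : ℕ) : sqrtNegM m * sqrtNegM m = -(m:ℂ) := by
  have h : (Real.sqrt m : ℝ) * Real.sqrt m = m := Real.mul_self_sqrt m.cast_nonneg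
  have h2 : ((Real.sqrt m : ℝ) : ℂ) * ((Real.sqrt m : ℝ) : ℂ) = (m:ℂ) := by
    rw [← Complex.ofReal_mul, h]; norm_num
  calc sqrtNegM m * sqrtNegM m
      = (Complex.I*Complex.I) * (((Real.sqrt m:ℝ):ℂ) * ((Real.sqrt m:ℝ):ℂ)) := by
        simp only [sqrtNegM]; ring
    _ = -(m:ℂ) := by rw [Complex.I_mul_I, h2]; ring

lemma conj_s (m : ℕ) : (starRingEnd ℂ) (sqrtNegM m) = -sqrtNegM m := by
  simp [sqrtNegM, Complex.conj_ofReal]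

lemma sqrtdK_eq (m : ℕ) :
    sqrtdK m = (if m % 4 = 3 then 1 else 2) * sqrtNegM m := by
  by_cases h : m % 4 = 3 <;> simp only [sqrtdK, dKabs, sqrtNegM, h, if_true, if_false]
  · ring
  · have : ((4*m : ℕ) : ℝ) = (2:ℝ)^2 * m := by push_cast; ring
    rw [this, Real.sqrt_mul (by positivity), Real.sqrt_sq (by norm_num : (0:ℝ) ≤ 2)]
    push_cast; ring

lemma s_ne_zero {m : ℕ} (hm : 0 < m) : sqrtNegM m ≠ 0 := by
  have : Real.sqrt m ≠ 0 := by positivity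
  simp [sqrtNegM, Complex.I_ne_zero, Complex.ofReal_eq_zero, this]

lemma sqrtdK_ne_zero {m : ℕ} (hm : 0 < m) : sqrtdK m ≠ 0 := by
  rw [sqrtdK_eq]
  by_cases h : m % 4 = 3 <;> simp [h, s_ne_zero hm]

lemma conj_sqrtdK (m : ℕ) : (starRingEnd ℂ) (sqrtdK m) = -sqrtdK m := by
  simp [sqrtdK, Complex.conj_ofReal]

lemma omegaK_eq (m : ℕ) :
    omegaK m = if m % 4 = 3 then (1 + sqrtNegM m)/2 else sqrtNegM m := rfl

lemma omega_sq (m : ℕ) : ∃ p q : ℤ, omegaK m * omegaK m = (p:ℂ) + (q:ℂ) * omegaK m := by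
  rw [omegaK_eq]
  by_cases h : m % 4 = 3 <;> simp only [h, if_true, if_false]
  · have h4 : ((4:ℤ)) ∣ (m:ℤ)+1 := by omega
    obtain ⟨c, hc⟩ := h4
    refine ⟨-c, 1, ?_⟩
    have hc' : ((m:ℂ)+1) = 4*(c:ℂ) := by exact_mod_cast congrArg (fun x : ℤ => (x:ℂ)) hc
    have := s_mul_s m
    push_cast
    linear_combination (1/4 : ℂ) * this - (1/4:ℂ) * hc'
  · exact ⟨-(m:ℤ), 0, by push_cast; simpa using s_mul_s m⟩

lemma mem_OK_iff {m : ℕ} {x : ℂ} :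
    x ∈ OK m ↔ ∃ u v : ℤ, x = (u:ℂ) + (v:ℂ) * omegaK m := by
  constructor
  · intro hx
    induction hx using Subring.closure_induction with
    | mem y hy => exact ⟨0, 1, by simp at hy; simp [hy]⟩
    | zero => exact ⟨0, 0, by simp⟩
    | one => exact ⟨1, 0, by simp⟩
    | add a b _ _ ha hb =>
        obtain ⟨u,v,rfl⟩ := ha; obtain ⟨u',v',rfl⟩ := hb
        exact ⟨u+u', v+v', by push_cast; ring⟩
    | neg a _ ha => obtain ⟨u,v,rfl⟩ := ha; exact ⟨-u,-v, by push_cast; ring⟩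
    | mul a b _ _ ha hb =>
        obtain ⟨u,v,rfl⟩ := ha; obtain ⟨u',v',rfl⟩ := hb
        obtain ⟨p,q,hpq⟩ := omega_sq m
        refine ⟨u*u' + v*v'*p, u*v' + u'*v + v*v'*q, ?_⟩
        push_cast
        linear_combination (v:ℂ)*(v':ℂ)*hpq
  · rintro ⟨u,v,rfl⟩
    have hω : omegaK m ∈ OK m := Subring.subset_closure rfl
    exact add_mem (intCast_mem _ u) (mul_mem (intCast_mem _ v) hω)

lemma s_mem_OK (m : ℕ) : sqrtNegM m ∈ OK m := by
  rw [mem_OK_iff, omegaK_eq]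
  by_cases h : m % 4 = 3 <;> simp only [h, if_true, if_false]
  · exact ⟨-1, 2, by push_cast; ring⟩
  · exact ⟨0, 1, by push_cast; ring⟩

lemma conj_omegaK (m : ℕ) : (starRingEnd ℂ) (omegaK m) =
    if m % 4 = 3 then 1 - omegaK m else -omegaK m := by
  rw [omegaK_eq]
  by_cases h : m % 4 = 3 <;> simp only [h, if_true, if_false, map_div₀, map_add, _root_.map_one]
  · rw [conj_s]
    have : (starRingEnd ℂ) (2:ℂ) = 2 := map_ofNat _ 2
    rw [this]; ring
  · exact conj_s m

lemma conj_mem_OK {m : ℕ} {x : ℂ} (hx : x ∈ OK m) : (starRingEnd ℂ) x ∈ OK m := by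
  rw [mem_OK_iff] at hx ⊢
  obtain ⟨u, v, rfl⟩ := hx
  rw [map_add, _root_.map_mul, conj_omegaK]
  by_cases h : m % 4 = 3 <;> simp only [h, if_true, if_false]
  · exact ⟨u + v, -v, by push_cast [map_intCast]; ring⟩
  · exact ⟨u, -v, by push_cast [map_intCast]; ring⟩

lemma sqrtdK_mem_OK (m : ℕ) : sqrtdK m ∈ OK m := by
  rw [sqrtdK_eq]
  by_cases h : m % 4 = 3 <;> simp only [h, if_true, if_false]
  · rw [one_mul]; exact s_mem_OK m
  · have h2 : (2:ℂ) = ((2:ℤ):ℂ) := by norm_num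
    rw [h2]; exact mul_mem (intCast_mem _ 2) (s_mem_OK m)

/-- Key integrality: for `a ∈ O_K`, `(m - s)a - (m + s)·conj a = N·√dK` for some integer `N`. -/
lemma key_S {m : ℕ} {a : ℂ} (ha : a ∈ OK m) :
    ∃ N : ℤ, ((m:ℂ) - sqrtNegM m) * a - ((m:ℂ) + sqrtNegM m) * (starRingEnd ℂ) a
      = (N:ℂ) * sqrtdK m := by
  rw [mem_OK_iff] at ha
  obtain ⟨u, v, rfl⟩ := ha
  have hconj : (starRingEnd ℂ) ((u:ℂ) + (v:ℂ) * omegaK m)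
      = (u:ℂ) + (v:ℂ) * ((starRingEnd ℂ) (omegaK m)) := by
    rw [map_add, _root_.map_mul, map_intCast, map_intCast]
  rw [hconj, conj_omegaK, sqrtdK_eq, omegaK_eq]
  by_cases h : m % 4 = 3 <;> simp only [h, if_true, if_false]
  · exact ⟨v*m - 2*u - v, by push_cast; ring⟩
  · exact ⟨v*m - u, by push_cast; ring⟩

lemma div_lemmas (m d : ℕ) (hdsf : Squarefree d) (hdvd : d ∣ dKabs m) :
    (d:ℤ) ∣ 2*m ∧ (d:ℤ) ∣ m*(m+1) ∧ (d:ℤ) ∣ m*((m:ℤ)-1) := by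
  have hdZ : Squarefree (d:ℤ) := Int.squarefree_natCast.mpr hdsf
  have h2m : (d:ℤ) ∣ 2*m := by
    by_cases h : m % 4 = 3
    · have hm : d ∣ m := by simpa [dKabs, h] using hdvd
      exact Dvd.dvd.mul_left (Int.natCast_dvd_natCast.mpr hm) 2
    · have h4 : (d:ℤ) ∣ 4*m := by
        have : d ∣ 4*m := by simpa [dKabs, h] using hdvd
        exact_mod_cast Int.natCast_dvd_natCast.mpr this
      have hsq : (d:ℤ) ∣ (2*m)^2 := h4.trans ⟨m, by ring⟩
      exact (hdZ.dvd_pow_iff_dvd two_ne_zero).1 hsq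
  refine ⟨h2m, ?_, ?_⟩
  · obtain ⟨k, hk⟩ := (Int.even_mul_succ_self (m:ℤ))
    have hsq : (d:ℤ) ∣ ((m:ℤ)*(m+1))^2 :=
      h2m.trans ⟨(m+1)*k, by linear_combination ((m:ℤ)*(m+1))*hk⟩
    exact (hdZ.dvd_pow_iff_dvd two_ne_zero).1 hsq
  · obtain ⟨k, hk⟩ := (Int.even_mul_succ_self ((m:ℤ)-1))
    have hsq : (d:ℤ) ∣ ((m:ℤ)*((m:ℤ)-1))^2 :=
      h2m.trans ⟨((m:ℤ)-1)*k, by linear_combination ((m:ℤ)*((m:ℤ)-1))*hk⟩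
    exact (hdZ.dvd_pow_iff_dvd two_ne_zero).1 hsq

lemma transform_mem (m : ℕ) (hm : 0 < m) {d : ℕ} (hd : 0 < d) (hdsf : Squarefree d)
    (hdvd : d ∣ dKabs m) {V T : Matrix (Fin 2) (Fin 2) ℂ}
    (hAL : IsAtkinLehner m d V) (hT : inLambda2 m T) : inLambda2 m (Vᴴ * T * V) := by
  obtain ⟨-, A, B, C, E, hV⟩ := hAL
  obtain ⟨hH, ⟨k, hk⟩, ⟨l, hl⟩, ⟨a, haOK, hta⟩⟩ := hT
  set s := sqrtNegM m with hsdef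
  have hs : s * s = -(m:ℂ) := s_mul_s m
  set rt := sqrtdK m with hrtdef
  have hrtne : rt ≠ 0 := sqrtdK_ne_zero hm
  have hdC : ((d:ℂ)) ≠ 0 := Nat.cast_ne_zero.mpr hd.ne'
  set q : ℂ := ((Real.sqrt d : ℝ) : ℂ) with hqdef
  have hq : q * q = (d:ℂ) := by
    rw [hqdef, ← Complex.ofReal_mul, Real.mul_self_sqrt d.cast_nonneg]; norm_num
  have hqne : q ≠ 0 := by
    intro h; rw [h, mul_zero] at hq; exact hdC hq.symm
  obtain ⟨h2m, hmm1, hmm2⟩ := div_lemmas m d hdsf hdvd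
  obtain ⟨m3, hm3⟩ := h2m
  obtain ⟨m1, hm1⟩ := hmm1
  obtain ⟨m2, hm2⟩ := hmm2
  have hm1C : (m:ℂ)*((m:ℂ)+1) = (d:ℂ)*(m1:ℂ) := by exact_mod_cast hm1
  have hm2C : (m:ℂ)*((m:ℂ)-1) = (d:ℂ)*(m2:ℂ) := by exact_mod_cast hm2
  have hm3C : 2*(m:ℂ) = (d:ℂ)*(m3:ℂ) := by exact_mod_cast hm3
  set abar := (starRingEnd ℂ) a with habardef
  have habarOK : abar ∈ OK m := conj_mem_OK haOK
  obtain ⟨N, hN⟩ := key_S haOK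
  rw [← hsdef, ← hrtdef] at hN
  have hta' : T 0 1 * rt = a := by rw [hta, div_mul_cancel₀ _ hrtne]
  have hT10 : T 1 0 = (starRingEnd ℂ) (T 0 1) := by
    have h := congrFun (congrFun hH 1) 0
    simpa [Matrix.conjTranspose_apply] using h.symm
  have hconjrt : (starRingEnd ℂ) rt = -rt := conj_sqrtdK m
  have htbar' : T 1 0 * rt = -abar := by
    rw [hT10, hta, map_div₀, hconjrt, ← habardef]
    field_simp
  have hS : ((m:ℂ) - s) * T 0 1 + ((m:ℂ) + s) * T 1 0 = (N:ℂ) := by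
    apply mul_right_cancel₀ hrtne
    linear_combination hN + ((m:ℂ)-s)*hta' + ((m:ℂ)+s)*htbar'
  set M : Matrix (Fin 2) (Fin 2) ℂ :=
    !![(A:ℂ)*d, (B:ℂ)*((m:ℂ)+s); (C:ℂ)*((m:ℂ)-s), (E:ℂ)*d] with hMdef
  set Nm : Matrix (Fin 2) (Fin 2) ℂ :=
    !![(A:ℂ)*d, (C:ℂ)*((m:ℂ)+s); (B:ℂ)*((m:ℂ)-s), (E:ℂ)*d] with hNmdef
  have hVM : V = q⁻¹ • M := hV
  have hcs : star s = -s := by rw [← starRingEnd_apply]; exact conj_s m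
  have hMH : Mᴴ = Nm := by
    rw [hMdef, hNmdef]
    ext i j
    fin_cases i <;> fin_cases j <;>
      simp [Matrix.conjTranspose_apply, star_mul', hcs, star_intCast, star_natCast]
    all_goals first | ring1 | tauto
  have hstarq : star (q⁻¹) = q⁻¹ := by
    rw [star_inv₀]; congr 1; rw [hqdef, ← starRingEnd_apply, Complex.conj_ofReal]
  have hVH : Vᴴ = q⁻¹ • Nm := by
    rw [hVM, Matrix.conjTranspose_smul, hMH, hstarq]
  have hprod : Vᴴ * T * V = (d:ℂ)⁻¹ • (Nm * T * M) := by
    rw [hVH, hVM, smul_mul_assoc, smul_mul_assoc, mul_smul_comm, smul_smul, ← mul_inv, hq]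
  have hentry : ∀ i j, (Nm * T * M) i j =
      (Nm i 0 * T 0 0 + Nm i 1 * T 1 0) * M 0 j
        + (Nm i 0 * T 0 1 + Nm i 1 * T 1 1) * M 1 j := by
    intro i j
    simp [Matrix.mul_apply, Fin.sum_univ_two]
  have hNM : (Nm 0 0 = (A:ℂ)*d ∧ Nm 0 1 = (C:ℂ)*((m:ℂ)+s) ∧ Nm 1 0 = (B:ℂ)*((m:ℂ)-s)
      ∧ Nm 1 1 = (E:ℂ)*d) ∧ (M 0 0 = (A:ℂ)*d ∧ M 0 1 = (B:ℂ)*((m:ℂ)+s)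
      ∧ M 1 0 = (C:ℂ)*((m:ℂ)-s) ∧ M 1 1 = (E:ℂ)*d) := by
    refine ⟨⟨?_,?_,?_,?_⟩,⟨?_,?_,?_,?_⟩⟩ <;> simp [hMdef, hNmdef]
  obtain ⟨⟨n00,n01,n10,n11⟩,⟨mm00,mm01,mm10,mm11⟩⟩ := hNM
  refine ⟨?_, ⟨A^2*d*k + A*C*N + C^2*m1*l, ?_⟩, ⟨B^2*m1*k + B*E*N + E^2*d*l, ?_⟩, ?_⟩
  · rw [Matrix.conjTranspose_mul, Matrix.conjTranspose_mul,
      Matrix.conjTranspose_conjTranspose, hH, Matrix.mul_assoc]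
  · rw [hprod, Matrix.smul_apply, hentry 0 0, n00, n01, mm00, mm10, hk, hl, smul_eq_mul]
    push_cast
    field_simp
    linear_combination ((A:ℂ)*C*(d:ℂ))*hS + (C:ℂ)^2*(l:ℂ)*hm1C - (C:ℂ)^2*(l:ℂ)*hs
  · rw [hprod, Matrix.smul_apply, hentry 1 1, n10, n11, mm01, mm11, hk, hl, smul_eq_mul]
    push_cast
    field_simp
    linear_combination ((B:ℂ)*E*(d:ℂ))*hS + (B:ℂ)^2*(k:ℂ)*hm1C - (B:ℂ)^2*(k:ℂ)*hs
  · refine ⟨(A:ℂ)*B*(k:ℂ)*((m:ℂ)+s)*rt + (C:ℂ)*E*(l:ℂ)*((m:ℂ)+s)*rt + (A:ℂ)*E*(d:ℂ)*a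
      - (B:ℂ)*C*((m2:ℂ) + (m3:ℂ)*s)*abar, ?_, ?_⟩
    · have hsOK : s ∈ OK m := s_mem_OK m
      have hrtOK : rt ∈ OK m := sqrtdK_mem_OK m
      have hmOK : ((m:ℕ):ℂ) ∈ OK m := natCast_mem _ m
      have hdOK : ((d:ℕ):ℂ) ∈ OK m := natCast_mem _ d
      exact sub_mem
        (add_mem (add_mem
          (mul_mem (mul_mem (mul_mem (mul_mem (intCast_mem _ A) (intCast_mem _ B))
            (intCast_mem _ k)) (add_mem hmOK hsOK)) hrtOK)
          (mul_mem (mul_mem (mul_mem (mul_mem (intCast_mem _ C) (intCast_mem _ E))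
            (intCast_mem _ l)) (add_mem hmOK hsOK)) hrtOK))
          (mul_mem (mul_mem (mul_mem (intCast_mem _ A) (intCast_mem _ E)) hdOK) haOK))
        (mul_mem (mul_mem (mul_mem (intCast_mem _ B) (intCast_mem _ C))
          (add_mem (intCast_mem _ m2) (mul_mem (intCast_mem _ m3) hsOK))) habarOK)
    · rw [hprod, Matrix.smul_apply, hentry 0 1, n00, n01, mm01, mm11, hk, hl, smul_eq_mul,
        ← hrtdef, eq_div_iff hrtne]
      field_simp
      linear_combination ((A:ℂ)*E*(d:ℂ)^2)*hta' + (B:ℂ)*C*((m:ℂ)+s)^2*htbar'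
        - (B:ℂ)*C*abar*hs - (B:ℂ)*C*abar*hm2C - (B:ℂ)*C*abar*s*hm3C

lemma atkinLehner_adjugate (m d : ℕ) {V : Matrix (Fin 2) (Fin 2) ℂ}
    (h : IsAtkinLehner m d V) : IsAtkinLehner m d V.adjugate := by
  obtain ⟨hdet, A, B, C, E, hV⟩ := h
  constructor
  · rw [Matrix.det_adjugate, hdet]; simp
  · refine ⟨E, -B, -C, A, ?_⟩
    rw [hV, Matrix.adjugate_smul, Matrix.adjugate_fin_two]
    push_cast
    congr 1
    · norm_num
    · ext i j
      fin_cases i <;> fin_cases j <;> simp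

lemma conj_transform (T V W : Matrix (Fin 2) (Fin 2) ℂ) (hVW : V * W = 1) :
    Wᴴ * (Vᴴ * T * V) * W = T := by
  have h : Wᴴ * (Vᴴ * T * V) * W = (V * W)ᴴ * T * (V * W) := by
    simp only [Matrix.conjTranspose_mul, Matrix.mul_assoc]
  rw [h, hVW, Matrix.conjTranspose_one, Matrix.one_mul, Matrix.mul_one]

lemma smul_transform (c : ℂ) (T V : Matrix (Fin 2) (Fin 2) ℂ) :
    c • (Vᴴ * T * V) = Vᴴ * (c • T) * V := by
  rw [Matrix.mul_smul, Matrix.smul_mul]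

lemma transform_eps (m : ℕ) (hm : 0 < m) {d : ℕ} (hd : 0 < d) (hdsf : Squarefree d)
    (hdvd : d ∣ dKabs m) {V T : Matrix (Fin 2) (Fin 2) ℂ}
    (hAL : IsAtkinLehner m d V) : eps m (Vᴴ * T * V) = eps m T := by
  have hVW : V * V.adjugate = 1 := by rw [Matrix.mul_adjugate, hAL.1, one_smul]
  have hALW := atkinLehner_adjugate m d hAL
  unfold eps
  congr 1
  ext n
  simp only [Set.mem_setOf_eq, and_congr_right_iff]
  intro hn
  constructor
  · intro h
    have h2 := transform_mem m hm hd hdsf hdvd hALW h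
    rwa [← smul_transform, conj_transform _ _ _ hVW] at h2
  · intro h
    have h2 := transform_mem m hm hd hdsf hdvd hAL h
    rwa [← smul_transform] at h2

/-- coefficients satisfying the Krieg relation are invariant under
Atkin-Lehner transformations: `α(T[V_d]) = α(T)` for all nonzero `T ∈ Λ(2,O_K)`, `T ≥ 0`. -/
theorem kriegRelation_atkinLehner_invariant (m : ℕ) (hm : 0 < m) (hmsf : Squarefree m)
    (r : ℤ) (α : Matrix (Fin 2) (Fin 2) ℂ → ℂ) (αstar : ℕ → ℂ)
    (hK : KriegRelation m r α αstar) :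
    ∀ d : ℕ, 0 < d → Squarefree d → d ∣ dKabs m →
      ∀ V, IsAtkinLehner m d V →
        ∀ T, inLambda2 m T → T.PosSemidef → T ≠ 0 → α (Vᴴ * T * V) = α T := by
  intro d hd hdsf hdvd V hAL T hT hpos hne
  have hVW : V * V.adjugate = 1 := by rw [Matrix.mul_adjugate, hAL.1, one_smul]
  have hT' : inLambda2 m (Vᴴ * T * V) := transform_mem m hm hd hdsf hdvd hAL hT
  have hpos' : (Vᴴ * T * V).PosSemidef := hpos.conjTranspose_mul_mul_same V
  have hback : (V.adjugate)ᴴ * (Vᴴ * T * V) * V.adjugate = T := conj_transform T V _ hVW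
  have hne' : Vᴴ * T * V ≠ 0 := by
    intro h0
    apply hne
    rw [← hback, h0, Matrix.mul_zero, Matrix.zero_mul]
  have hdeteq : (Vᴴ * T * V).det = T.det := by
    rw [Matrix.det_mul, Matrix.det_mul, Matrix.det_conjTranspose, hAL.1]
    simp
  rw [hK _ hT' hpos' hne', hK _ hT hpos hne,
    transform_eps m hm hd hdsf hdvd hAL, hdeteq]
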